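/- Let X and Y be measurable spaces such that the underlying set of X is infinite. Then every set in the σ-algebra Σ_{X⊸Y} belongs to the family Ω_{X,Y}; that is, Σ_{X⊸Y} ⊆ Ω_{X,Y}. -/

import Mathlib

open MeasureTheory

/-- The canonical tensor σ-algebra `Σ_{X⊗Y}`: a set is measurable iff all of its
vertical and horizontal sections are measurable. -/
def tensorSigma (X Y : Type*) [MeasurableSpace X] [MeasurableSpace Y] :
    MeasurableSpace (X × Y) where
  MeasurableSet' A :=
    (∀ x : X, MeasurableSet {y : Y | (x, y) ∈ A}) ∧
    (∀ y : Y, MeasurableSet {x : X | (x, y) ∈ A})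
  measurableSet_empty := ⟨fun _ => by simp, fun _ => by simp⟩
  measurableSet_compl := fun A hA =>
    ⟨fun x => (hA.1 x).compl, fun y => (hA.2 y).compl⟩
  measurableSet_iUnion := fun A hA =>
    ⟨fun x => by
        have : {y : Y | (x, y) ∈ ⋃ n, A n} = ⋃ n, {y | (x, y) ∈ A n} := by ext; simp
        rw [this]; exact MeasurableSet.iUnion fun n => (hA n).1 x,
     fun y => by
        have : {x : X | (x, y) ∈ ⋃ n, A n} = ⋃ n, {x | (x, y) ∈ A n} := by ext; simp
        rw [this]; exact MeasurableSet.iUnion fun n => (hA n).2 y⟩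

/-- The internal-hom σ-algebra `Σ_{X⊸Y}` on the set of measurable functions,
generated by the sets `⟨x,U⟩ = {f | f x ∈ U}`. -/
def homSigma (X Y : Type*) [MeasurableSpace X] [MeasurableSpace Y] :
    MeasurableSpace {f : X → Y // Measurable f} :=
  MeasurableSpace.generateFrom
    {S | ∃ (x : X) (U : Set Y), MeasurableSet U ∧ S = {f | f.1 x ∈ U}}

/-- The family `Ω_{X,Y}` of sets of the form `⟨h,V⟩` for `h : ℕ → X` injective
and `V ⊆ Y^ℕ`. -/
def Omega (X Y : Type*) [MeasurableSpace X] [MeasurableSpace Y] :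
    Set (Set {f : X → Y // Measurable f}) :=
  {S | ∃ h : ℕ → X, Function.Injective h ∧
        ∃ V : Set (ℕ → Y), S = {f | (fun n => f.1 (h n)) ∈ V}}

/-!
`Ω_{X,Y}` is itself a σ-algebra containing the generators `⟨x,U⟩`. The only nontrivial point is
countable unions: the countably many injective sequences involved have countable joint range,
which an infinite `X` lets us enumerate by a single injective sequence `g`, and each set
`⟨h,V⟩` can be re-expressed as `⟨g,W⟩` by precomposing with a reindexing of `ℕ`.
-/

lemma exists_injective_nat_subset_range {X : Type*} [Infinite X] {s : Set X}
    (hs : s.Countable) : ∃ h : ℕ → X, Function.Injective h ∧ s ⊆ Set.range h := by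
  set t : Set X := s ∪ Set.range (Infinite.natEmbedding X)
  have : Countable t := (hs.union (Set.countable_range _)).to_subtype
  have : Infinite t := ((Set.infinite_range_of_injective
    (Infinite.natEmbedding X).injective).mono Set.subset_union_right).to_subtype
  obtain ⟨e⟩ := nonempty_equiv_of_countable (α := ℕ) (β := t)
  refine ⟨fun n => e n, Subtype.val_injective.comp e.injective, fun x hx => ?_⟩
  exact ⟨e.symm ⟨x, Or.inl hx⟩, by simp⟩

lemma exists_comp_mem_iff_of_range_subset {X Y : Type*} {h g : ℕ → X}
    (hhg : Set.range h ⊆ Set.range g) (V : Set (ℕ → Y)) :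
    ∃ W : Set (ℕ → Y), ∀ p : X → Y, p ∘ g ∈ W ↔ p ∘ h ∈ V := by
  choose φ hφ using fun k => hhg (Set.mem_range_self k)
  refine ⟨(fun q => q ∘ φ) ⁻¹' V, fun p => ?_⟩
  have : p ∘ g ∘ φ = p ∘ h := funext fun k => congrArg p (hφ k)
  simp only [Set.mem_preimage, Function.comp_assoc, this]

section Omega

variable {X Y : Type*} [MeasurableSpace X] [MeasurableSpace Y]

lemma empty_mem_Omega [Infinite X] : (∅ : Set {f : X → Y // Measurable f}) ∈ Omega X Y :=
  ⟨Infinite.natEmbedding X, (Infinite.natEmbedding X).injective, ∅, by simp⟩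

lemma compl_mem_Omega {S : Set {f : X → Y // Measurable f}} (hS : S ∈ Omega X Y) :
    Sᶜ ∈ Omega X Y := by
  obtain ⟨h, hinj, V, rfl⟩ := hS
  exact ⟨h, hinj, Vᶜ, rfl⟩

lemma eval_preimage_mem_Omega [Infinite X] (x : X) (U : Set Y) :
    {f : {f : X → Y // Measurable f} | f.1 x ∈ U} ∈ Omega X Y := by
  obtain ⟨h, hinj, hx⟩ := exists_injective_nat_subset_range (Set.countable_singleton x)
  obtain ⟨k, rfl⟩ := hx rfl
  exact ⟨h, hinj, {q | q k ∈ U}, rfl⟩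

lemma iUnion_mem_Omega [Infinite X] {S : ℕ → Set {f : X → Y // Measurable f}}
    (hS : ∀ n, S n ∈ Omega X Y) : (⋃ n, S n) ∈ Omega X Y := by
  choose h _ V hV using hS
  obtain ⟨g, hg, hcover⟩ := exists_injective_nat_subset_range
    (Set.countable_iUnion fun n => Set.countable_range (h n))
  choose W hW using fun n => exists_comp_mem_iff_of_range_subset
    ((Set.subset_iUnion (fun n => Set.range (h n)) n).trans hcover) (V n)
  refine ⟨g, hg, ⋃ n, W n, ?_⟩
  ext f
  simp only [Set.mem_iUnion, hV, Set.mem_ofPred_eq]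
  exact exists_congr fun n => (hW n f.1).symm

end Omega

/-- For `X` with infinite underlying set, every `Σ_{X⊸Y}`-measurable set
belongs to `Ω_{X,Y}`. -/
theorem homSigma_subset_Omega (X Y : Type*) [MeasurableSpace X] [MeasurableSpace Y]
    [Infinite X] :
    ∀ K : Set {f : X → Y // Measurable f},
      MeasurableSet[homSigma X Y] K → K ∈ Omega X Y := by
  intro K hK
  induction hK with
  | basic S hS =>
    obtain ⟨x, U, -, rfl⟩ := hS
    exact eval_preimage_mem_Omega x U
  | empty => exact empty_mem_Omega
  | compl _ _ ih => exact compl_mem_Omega ih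
  | iUnion _ _ ih => exact iUnion_mem_Omega ih
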